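/- If X, Y ∈ 𝓛_Q are comonotone random variables, i.e., (X(ω) − X(ω'))·(Y(ω) − Y(ω')) ≥ 0 for all ω, ω' ∈ Ω, then X + Y ∈ 𝓛_Q and ϱ_Q[X+Y] = ϱ_Q[X] + ϱ_Q[Y] (in [−∞,∞)). -/

import Mathlib

open MeasureTheory

/-- The distribution function `F_X(x) = P[X ≤ x]` of a random variable `X`. -/
noncomputable def distFun {Ω : Type*} [MeasurableSpace Ω] (P : Measure Ω) (X : Ω → ℝ) (x : ℝ) : ℝ :=
  (P {ω | X ω ≤ x}).toReal

/-- The (lower) quantile function `F^←_X(u) = inf {x | F_X(x) ≥ u}`. -/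
noncomputable def quantile {Ω : Type*} [MeasurableSpace Ω] (P : Measure Ω) (X : Ω → ℝ) (u : ℝ) : ℝ :=
  sInf {x : ℝ | u ≤ distFun P X x}

/-- A distortion function: an increasing, right-continuous `D : [0,1] → [0,1]`
with `D 0 = 0` and `sup_{u ∈ (0,1)} D u = 1`. -/
structure IsDistortion (D : ℝ → ℝ) : Prop where
  mapsTo : ∀ u ∈ Set.Icc (0:ℝ) 1, D u ∈ Set.Icc (0:ℝ) 1
  mono : ∀ ⦃a b : ℝ⦄, 0 ≤ a → a ≤ b → b ≤ 1 → D a ≤ D b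
  rightCont : ∀ u ∈ Set.Ico (0:ℝ) 1, ContinuousWithinAt D (Set.Icc u 1) u
  zero : D 0 = 0
  sup_one : sSup (D '' Set.Ioo 0 1) = 1

/-- `Q` is the probability measure on the Borel sets of `(0,1)` corresponding to
the distortion function `D`, i.e. `Q (a,b] = D b - D a` for `0 < a ≤ b < 1`. -/
def IsCorresponding (D : ℝ → ℝ) (Q : Measure ℝ) : Prop :=
  IsProbabilityMeasure Q ∧ Q (Set.Ioo (0:ℝ) 1) = 1 ∧
    ∀ a b : ℝ, 0 < a → a ≤ b → b < 1 → Q (Set.Ioc a b) = ENNReal.ofReal (D b - D a)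

/-- `X ∈ 𝓛_Q`, i.e. `∫_{(0,1)} (F^←_X(u))⁺ dQ(u) < ∞`. -/
def memLQ {Ω : Type*} [MeasurableSpace Ω] (P : Measure Ω) (Q : Measure ℝ) (X : Ω → ℝ) : Prop :=
  ∫⁻ u in Set.Ioo (0:ℝ) 1, ENNReal.ofReal (max (quantile P X u) 0) ∂Q < ⊤

/-- The quantile risk measure
`ϱ_Q[X] = ∫_{(0,1)} (F^←_X(u))⁺ dQ(u) - ∫_{(0,1)} (F^←_X(u))⁻ dQ(u)`, with values in `EReal`. -/
noncomputable def rho {Ω : Type*} [MeasurableSpace Ω] (P : Measure Ω) (Q : Measure ℝ)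
    (X : Ω → ℝ) : EReal :=
  ((∫⁻ u in Set.Ioo (0:ℝ) 1, ENNReal.ofReal (max (quantile P X u) 0) ∂Q) : EReal)
    - ((∫⁻ u in Set.Ioo (0:ℝ) 1, ENNReal.ofReal (max (-(quantile P X u)) 0) ∂Q) : EReal)

/-!
For comonotone `X` and `Y` the sublevel sets `{X ≤ a}` and `{Y ≤ b}` are nested, since two points
outside each other's set would give `(X ω - X ω') * (Y ω - Y ω') < 0`. Hence `{X ≤ a} ∩ {Y ≤ b}`
and `{X ≤ a} ∪ {Y ≤ b}` are one of the two sets, and squeezing `{X + Y ≤ a + b}` between them gives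
`min (F_X a) (F_Y b) ≤ F_{X+Y} (a + b) ≤ max (F_X a) (F_Y b)`. Through the Galois connection
`F^←(u) ≤ x ↔ u ≤ F(x)` (right-continuity of `F`), this makes the quantile function additive on
`(0,1)`. The risk measure is then additive by integrating the pointwise identity
`(a+b)⁺ + a⁻ + b⁻ = a⁺ + b⁺ + (a+b)⁻`; finiteness of the positive parts rules out `∞ - ∞`.
-/

open Set Filter Topology ProbabilityTheory ENNReal

theorem StieltjesFunction.le_apply_csInf_setOf_le (F : StieltjesFunction ℝ) {u : ℝ}
    (hne : {x | u ≤ F x}.Nonempty) : u ≤ F (sInf {x | u ≤ F x}) := by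
  have hF : Tendsto F (𝓝[>] sInf {x | u ≤ F x}) (𝓝 (F (sInf {x | u ≤ F x}))) :=
    (F.right_continuous _).mono Ioi_subset_Ici_self
  refine ge_of_tendsto hF (eventually_nhdsWithin_of_forall fun y hy => ?_)
  obtain ⟨x, hx, hxy⟩ := exists_lt_of_csInf_lt hne hy
  exact hx.trans (F.mono hxy.le)

theorem StieltjesFunction.csInf_setOf_le_le_iff (F : StieltjesFunction ℝ) {u x : ℝ}
    (hne : {x | u ≤ F x}.Nonempty) (hbdd : BddBelow {x | u ≤ F x}) :
    sInf {x | u ≤ F x} ≤ x ↔ u ≤ F x :=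
  ⟨fun h => (F.le_apply_csInf_setOf_le hne).trans (F.mono h), fun h => csInf_le hbdd h⟩

section Quantile

variable {Ω : Type*} [MeasurableSpace Ω] {P : Measure Ω} {X Y : Ω → ℝ} {u x y : ℝ}

theorem distFun_le_distFun_of_subset [IsFiniteMeasure P] (h : {ω | X ω ≤ x} ⊆ {ω | Y ω ≤ y}) :
    distFun P X x ≤ distFun P Y y :=
  measureReal_mono h

theorem distFun_eq_cdf [IsProbabilityMeasure P] (hX : Measurable X) :
    distFun P X = cdf (P.map X) := by
  have := Measure.isProbabilityMeasure_map (μ := P) hX.aemeasurable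
  ext x
  rw [cdf_eq_real, map_measureReal_apply hX measurableSet_Iic]
  rfl

variable [IsProbabilityMeasure P]

theorem quantile_le_iff (hX : Measurable X) (hu0 : 0 < u) (hu1 : u < 1) :
    quantile P X u ≤ x ↔ u ≤ distFun P X x := by
  rw [quantile, distFun_eq_cdf hX]
  refine StieltjesFunction.csInf_setOf_le_le_iff _ ?_ ?_
  · exact ((tendsto_cdf_atTop _).eventually (eventually_ge_nhds hu1)).exists
  · obtain ⟨b, hb⟩ :=
      eventually_atBot.1 ((tendsto_cdf_atBot _).eventually (eventually_lt_nhds hu0))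
    exact ⟨b, fun z hz => le_of_not_gt fun hzb => (hb z hzb.le).not_ge hz⟩

theorem le_distFun_quantile (hX : Measurable X) (hu0 : 0 < u) (hu1 : u < 1) :
    u ≤ distFun P X (quantile P X u) :=
  (quantile_le_iff hX hu0 hu1).1 le_rfl

theorem distFun_lt_of_lt_quantile (hX : Measurable X) (hu0 : 0 < u) (hu1 : u < 1)
    (hx : x < quantile P X u) : distFun P X x < u :=
  lt_of_not_ge fun h => ((quantile_le_iff hX hu0 hu1).2 h).not_gt hx

theorem monotoneOn_quantile (hX : Measurable X) : MonotoneOn (quantile P X) (Ioo 0 1) :=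
  fun _ ha _ hb hab =>
    (quantile_le_iff hX ha.1 ha.2).2 (hab.trans (le_distFun_quantile hX hb.1 hb.2))

end Quantile

def Comonotone {Ω : Type*} (X Y : Ω → ℝ) : Prop :=
  ∀ ω ω', 0 ≤ (X ω - X ω') * (Y ω - Y ω')

namespace Comonotone

variable {Ω : Type*} {X Y : Ω → ℝ}

theorem setOf_le_subset_or_subset (h : Comonotone X Y) (a b : ℝ) :
    {ω | X ω ≤ a} ⊆ {ω | Y ω ≤ b} ∨ {ω | Y ω ≤ b} ⊆ {ω | X ω ≤ a} := by
  rw [or_iff_not_imp_left, not_subset]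
  rintro ⟨ω, hXω, hYω⟩ ω' (hYω' : Y ω' ≤ b)
  show X ω' ≤ a
  by_contra! hXω'
  have hXω : X ω ≤ a := hXω
  have hYω : b < Y ω := not_le.1 hYω
  exact (h ω ω').not_gt (mul_neg_of_neg_of_pos (by linarith) (by linarith))

variable [MeasurableSpace Ω] {P : Measure Ω} [IsFiniteMeasure P]

theorem min_distFun_le_distFun_add (h : Comonotone X Y) (a b : ℝ) :
    min (distFun P X a) (distFun P Y b) ≤ distFun P (fun ω => X ω + Y ω) (a + b) := by
  rcases h.setOf_le_subset_or_subset a b with hXY | hYX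
  · refine (min_le_left _ _).trans (distFun_le_distFun_of_subset fun ω (hω : X ω ≤ a) => ?_)
    have hYω : Y ω ≤ b := hXY hω
    exact add_le_add hω hYω
  · refine (min_le_right _ _).trans (distFun_le_distFun_of_subset fun ω (hω : Y ω ≤ b) => ?_)
    have hXω : X ω ≤ a := hYX hω
    exact add_le_add hXω hω

theorem distFun_add_le_max (h : Comonotone X Y) (a b : ℝ) :
    distFun P (fun ω => X ω + Y ω) (a + b) ≤ max (distFun P X a) (distFun P Y b) := by
  have hsub : {ω | X ω + Y ω ≤ a + b} ⊆ {ω | X ω ≤ a} ∪ {ω | Y ω ≤ b} := by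
    intro ω (hω : X ω + Y ω ≤ a + b)
    rcases le_or_gt (X ω) a with hXa | hXa
    · exact Or.inl hXa
    · exact Or.inr (show Y ω ≤ b by linarith)
  rcases h.setOf_le_subset_or_subset a b with hXY | hYX
  · rw [union_eq_right.2 hXY] at hsub
    exact (distFun_le_distFun_of_subset hsub).trans (le_max_right _ _)
  · rw [union_eq_left.2 hYX] at hsub
    exact (distFun_le_distFun_of_subset hsub).trans (le_max_left _ _)

theorem quantile_add [IsProbabilityMeasure P] (h : Comonotone X Y) (hX : Measurable X)
    (hY : Measurable Y) {u : ℝ} (hu0 : 0 < u) (hu1 : u < 1) :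
    quantile P (fun ω => X ω + Y ω) u = quantile P X u + quantile P Y u := by
  have hZ : Measurable fun ω => X ω + Y ω := hX.add hY
  apply le_antisymm
  · rw [quantile_le_iff hZ hu0 hu1]
    exact (le_min (le_distFun_quantile hX hu0 hu1) (le_distFun_quantile hY hu0 hu1)).trans
      (h.min_distFun_le_distFun_add _ _)
  · by_contra! hlt
    set c := quantile P (fun ω => X ω + Y ω) u
    set δ := (quantile P X u + quantile P Y u - c) / 2
    have hc : c = (quantile P X u - δ) + (quantile P Y u - δ) := by ring
    have hδ : 0 < δ := by linarith
    have hmax := h.distFun_add_le_max (P := P) (quantile P X u - δ) (quantile P Y u - δ)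
    rw [← hc] at hmax
    rcases le_max_iff.1 ((le_distFun_quantile hZ hu0 hu1).trans hmax) with hXu | hYu
    · exact (distFun_lt_of_lt_quantile hX hu0 hu1 (by linarith)).not_ge hXu
    · exact (distFun_lt_of_lt_quantile hY hu0 hu1 (by linarith)).not_ge hYu

end Comonotone

/-- `rho P Q X` is by definition `erealIntegral (Q.restrict (Ioo 0 1)) (quantile P X)`. -/
noncomputable def erealIntegral {α : Type*} [MeasurableSpace α] (μ : Measure α) (f : α → ℝ) :
    EReal :=
  (∫⁻ x, ENNReal.ofReal (max (f x) 0) ∂μ : EReal) -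
    (∫⁻ x, ENNReal.ofReal (max (-f x) 0) ∂μ : EReal)

theorem EReal.coe_ennreal_sub_eq_add_sub {a b a₁ b₁ a₂ b₂ : ℝ≥0∞} (ha : a ≠ ∞) (ha₁ : a₁ ≠ ∞)
    (ha₂ : a₂ ≠ ∞) (h : a + b₁ + b₂ = a₁ + a₂ + b) :
    (a - b : EReal) = (a₁ - b₁ : EReal) + (a₂ - b₂ : EReal) := by
  lift a to NNReal using ha
  lift a₁ to NNReal using ha₁
  lift a₂ to NNReal using ha₂
  by_cases hb : b = ∞
  · rw [hb, add_top, ENNReal.add_eq_top, ENNReal.add_eq_top] at h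
    rcases h with (h | rfl) | rfl
    · exact absurd h ENNReal.coe_ne_top
    all_goals simp [hb]
  · have hfin : (a : ℝ≥0∞) + b₁ + b₂ ≠ ∞ := h ▸ by finiteness
    simp only [ne_eq, ENNReal.add_eq_top, not_or] at hfin
    obtain ⟨⟨-, hb₁⟩, hb₂⟩ := hfin
    lift b to NNReal using hb
    lift b₁ to NNReal using hb₁
    lift b₂ to NNReal using hb₂
    have h' : (a : ℝ) + b₁ + b₂ = a₁ + a₂ + b := by exact_mod_cast h
    simp only [EReal.coe_nnreal_eq_coe_real, ← EReal.coe_sub, ← EReal.coe_add,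
      EReal.coe_eq_coe_iff]
    linarith

section ErealIntegral

variable {α : Type*} [MeasurableSpace α] {μ : Measure α} {f g h : α → ℝ}

theorem ofReal_max_add_add_ofReal_max_neg (a b : ℝ) :
    ENNReal.ofReal (max (a + b) 0) + ENNReal.ofReal (max (-a) 0) + ENNReal.ofReal (max (-b) 0) =
      ENNReal.ofReal (max a 0) + ENNReal.ofReal (max b 0) + ENNReal.ofReal (max (-(a + b)) 0) := by
  simp only [← ENNReal.ofReal_add (le_max_right _ 0) (le_max_right _ 0),
    ← ENNReal.ofReal_add (add_nonneg (le_max_right _ 0) (le_max_right _ 0)) (le_max_right _ 0)]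
  congr 1
  linarith [max_zero_sub_max_neg_zero_eq_self a, max_zero_sub_max_neg_zero_eq_self b,
    max_zero_sub_max_neg_zero_eq_self (a + b)]

theorem lintegral_ofReal_max_lt_top_of_ae_eq_add (hf : AEMeasurable f μ)
    (hfg : ∀ᵐ x ∂μ, h x = f x + g x) (hf_top : ∫⁻ x, ENNReal.ofReal (max (f x) 0) ∂μ < ∞)
    (hg_top : ∫⁻ x, ENNReal.ofReal (max (g x) 0) ∂μ < ∞) :
    ∫⁻ x, ENNReal.ofReal (max (h x) 0) ∂μ < ∞ := by
  have hle : ∀ᵐ x ∂μ, ENNReal.ofReal (max (h x) 0) ≤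
      ENNReal.ofReal (max (f x) 0) + ENNReal.ofReal (max (g x) 0) := by
    filter_upwards [hfg] with x hx
    rw [hx, ← ENNReal.ofReal_add (le_max_right _ _) (le_max_right _ _)]
    exact ENNReal.ofReal_le_ofReal (max_le (add_le_add (le_max_left _ _) (le_max_left _ _))
      (add_nonneg (le_max_right _ _) (le_max_right _ _)))
  calc ∫⁻ x, ENNReal.ofReal (max (h x) 0) ∂μ
      ≤ ∫⁻ x, ENNReal.ofReal (max (f x) 0) + ENNReal.ofReal (max (g x) 0) ∂μ :=
        lintegral_mono_ae hle
    _ = (∫⁻ x, ENNReal.ofReal (max (f x) 0) ∂μ) + ∫⁻ x, ENNReal.ofReal (max (g x) 0) ∂μ :=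
        lintegral_add_left' (hf.max aemeasurable_const).ennreal_ofReal _
    _ < ∞ := ENNReal.add_lt_top.2 ⟨hf_top, hg_top⟩

theorem erealIntegral_eq_add_of_ae_eq_add (hf : AEMeasurable f μ) (hg : AEMeasurable g μ)
    (hfg : ∀ᵐ x ∂μ, h x = f x + g x) (hf_top : ∫⁻ x, ENNReal.ofReal (max (f x) 0) ∂μ < ∞)
    (hg_top : ∫⁻ x, ENNReal.ofReal (max (g x) 0) ∂μ < ∞) :
    erealIntegral μ h = erealIntegral μ f + erealIntegral μ g := by
  have hpos {k : α → ℝ} (hk : AEMeasurable k μ) :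
      AEMeasurable (fun x => ENNReal.ofReal (max (k x) 0)) μ :=
    (hk.max aemeasurable_const).ennreal_ofReal
  have hneg {k : α → ℝ} (hk : AEMeasurable k μ) :
      AEMeasurable (fun x => ENNReal.ofReal (max (-k x) 0)) μ :=
    (hk.neg.max aemeasurable_const).ennreal_ofReal
  have hh : AEMeasurable h μ := (hf.add hg).congr (hfg.mono fun x hx => hx.symm)
  refine EReal.coe_ennreal_sub_eq_add_sub
    (lintegral_ofReal_max_lt_top_of_ae_eq_add hf hfg hf_top hg_top).ne hf_top.ne hg_top.ne ?_
  have hsum₁ : AEMeasurable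
      (fun x => ENNReal.ofReal (max (h x) 0) + ENNReal.ofReal (max (-f x) 0)) μ :=
    (hpos hh).add (hneg hf)
  have hsum₂ : AEMeasurable
      (fun x => ENNReal.ofReal (max (f x) 0) + ENNReal.ofReal (max (g x) 0)) μ :=
    (hpos hf).add (hpos hg)
  rw [← lintegral_add_left' (hpos hh), ← lintegral_add_left' hsum₁,
    ← lintegral_add_left' (hpos hf), ← lintegral_add_left' hsum₂]
  refine lintegral_congr_ae (hfg.mono fun x hx => ?_)
  simp only [hx]
  exact ofReal_max_add_add_ofReal_max_neg (f x) (g x)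

end ErealIntegral

theorem rho_add_of_comonotone_general {Ω : Type*} [MeasurableSpace Ω]
    (P : Measure Ω) [IsProbabilityMeasure P] (Q : Measure ℝ)
    (X Y : Ω → ℝ) (hX : Measurable X) (hY : Measurable Y)
    (hXQ : memLQ P Q X) (hYQ : memLQ P Q Y)
    (hcom : ∀ ω ω' : Ω, 0 ≤ (X ω - X ω') * (Y ω - Y ω')) :
    memLQ P Q (fun ω => X ω + Y ω) ∧
      rho P Q (fun ω => X ω + Y ω) = rho P Q X + rho P Q Y := by
  have hq : ∀ᵐ u ∂Q.restrict (Ioo 0 1),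
      quantile P (fun ω => X ω + Y ω) u = quantile P X u + quantile P Y u :=
    ae_restrict_of_forall_mem measurableSet_Ioo fun u hu =>
      Comonotone.quantile_add hcom hX hY hu.1 hu.2
  have hXm : AEMeasurable (quantile P X) (Q.restrict (Ioo 0 1)) :=
    aemeasurable_restrict_of_monotoneOn measurableSet_Ioo (monotoneOn_quantile hX)
  have hYm : AEMeasurable (quantile P Y) (Q.restrict (Ioo 0 1)) :=
    aemeasurable_restrict_of_monotoneOn measurableSet_Ioo (monotoneOn_quantile hY)
  exact ⟨lintegral_ofReal_max_lt_top_of_ae_eq_add hXm hq hXQ hYQ,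
    erealIntegral_eq_add_of_ae_eq_add hXm hYm hq hXQ hYQ⟩

/-- If `X, Y ∈ 𝓛_Q` are comonotone, then `X + Y ∈ 𝓛_Q` and
`ϱ_Q[X+Y] = ϱ_Q[X] + ϱ_Q[Y]` in `[-∞,∞)`. -/
theorem rho_add_of_comonotone {Ω : Type*} [MeasurableSpace Ω]
    (P : Measure Ω) [IsProbabilityMeasure P] (D : ℝ → ℝ) (Q : Measure ℝ)
    (hD : IsDistortion D) (hQ : IsCorresponding D Q)
    (X Y : Ω → ℝ) (hX : Measurable X) (hY : Measurable Y)
    (hXQ : memLQ P Q X) (hYQ : memLQ P Q Y)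
    (hcom : ∀ ω ω' : Ω, 0 ≤ (X ω - X ω') * (Y ω - Y ω')) :
    memLQ P Q (fun ω => X ω + Y ω) ∧
      rho P Q (fun ω => X ω + Y ω) = rho P Q X + rho P Q Y :=
  rho_add_of_comonotone_general P Q X Y hX hY hXQ hYQ hcom
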